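/- arXiv:1901.03372 — 3 statements merged into one kernel-verified Lean document; each statement's English description precedes it below -/
import Mathlib

section
/- Let p be a prime and let G and H be finite noncyclic powerful p-groups. Then σ_P(G × H) ≤ min(σ_P(G), σ_P(H)). -/
/-- A finite `p`-group `H` is *powerful* if, when `p` is odd, `[H,H]` is contained in the
subgroup generated by `p`-th powers, and when `p = 2`, `[H,H]` is contained in the subgroup
generated by fourth powers. -/
def IsPowerful (p : ℕ) (H : Type*) [Group H] : Prop :=
  commutator H ≤ Subgroup.closure {x : H | ∃ g : H, x = g ^ (if p = 2 then 4 else p)}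

/-- A cover of a group by proper subgroups. -/
def IsSubgroupCover {G : Type*} [Group G] (S : Finset (Subgroup G)) : Prop :=
  (∀ H ∈ S, H ≠ ⊤) ∧ ∀ g : G, ∃ H ∈ S, g ∈ H

/-- The powerful covering number `σ_P(G)`: the least number of subgroups in a cover of `G`
by proper powerful subgroups. -/
noncomputable def powerfulCoveringNumber (p : ℕ) (G : Type*) [Group G] : ℕ :=
  sInf {n : ℕ | ∃ S : Finset (Subgroup G),
    S.card = n ∧ IsSubgroupCover S ∧ ∀ H ∈ S, IsPowerful p H}

/-
A cover of `G` by proper powerful subgroups `K₁, …, Kₙ` pulls back along the projection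
`G × H → G` to the cover of `G × H` by the proper subgroups `Kᵢ × H`, which are powerful
because `H` is and powerfulness passes to direct products. So `σ_P(G × H) ≤ σ_P(G)`, and
symmetrically for `H`. Non-cyclicity guarantees that `σ_P(G)` is not the junk value `sInf ∅ = 0`:
the cyclic subgroups of a finite noncyclic group form a cover by proper abelian, hence powerful,
subgroups.
-/

open Subgroup

def powerClosure (k : ℕ) (A : Type*) [Group A] : Subgroup A :=
  closure {x : A | ∃ g : A, x = g ^ k}

theorem isPowerful_iff_commutator_le_powerClosure (p : ℕ) (A : Type*) [Group A] :
    IsPowerful p A ↔ commutator A ≤ powerClosure (if p = 2 then 4 else p) A :=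
  Iff.rfl

theorem map_powerClosure_le {A B : Type*} [Group A] [Group B] (k : ℕ) (f : A →* B) :
    (powerClosure k A).map f ≤ powerClosure k B := by
  rw [powerClosure, MonoidHom.map_closure]
  refine closure_mono ?_
  rintro _ ⟨_, ⟨g, rfl⟩, rfl⟩
  exact ⟨f g, map_pow f g k⟩

namespace IsPowerful

variable {p : ℕ} {A B : Type*} [Group A] [Group B]

theorem of_isMulCommutative [IsMulCommutative A] : IsPowerful p A := by
  rw [IsPowerful, commutator_eq_bot]
  exact bot_le

theorem of_surjective (hA : IsPowerful p A) (f : A →* B) (hf : Function.Surjective f) :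
    IsPowerful p B := by
  rw [isPowerful_iff_commutator_le_powerClosure] at hA ⊢
  calc commutator B = (commutator A).map f := by
        rw [commutator_def, commutator_def, map_commutator, ← MonoidHom.range_eq_map,
          MonoidHom.range_eq_top.mpr hf]
    _ ≤ _ := (map_mono hA).trans (map_powerClosure_le _ f)

theorem prod (hA : IsPowerful p A) (hB : IsPowerful p B) : IsPowerful p (A × B) := by
  rw [isPowerful_iff_commutator_le_powerClosure] at hA hB ⊢
  calc commutator (A × B) = (commutator A).prod (commutator B) := by
        rw [commutator_def, ← top_prod_top, commutator_prod_prod]; rfl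
    _ ≤ _ := (prod_mono hA hB).trans <| prod_le_iff.mpr
        ⟨map_powerClosure_le _ _, map_powerClosure_le _ _⟩

theorem of_mulEquiv (hA : IsPowerful p A) (e : A ≃* B) : IsPowerful p B :=
  hA.of_surjective e.toMonoidHom e.surjective

theorem subgroup_prod {K : Subgroup A} {L : Subgroup B} (hK : IsPowerful p K)
    (hL : IsPowerful p L) : IsPowerful p (K.prod L) :=
  (hK.prod hL).of_mulEquiv (prodEquiv K L).symm

end IsPowerful

section Cover

variable {G G' : Type*} [Group G] [Group G']

theorem isSubgroupCover_image_zpowers [Fintype G] [DecidableEq (Subgroup G)]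
    (hG : ¬ IsCyclic G) : IsSubgroupCover (Finset.univ.image fun g : G ↦ zpowers g) := by
  refine ⟨Finset.forall_mem_image.mpr fun g _ hg ↦ ?_,
    fun g ↦ ⟨zpowers g, Finset.mem_image_of_mem _ (Finset.mem_univ g), mem_zpowers g⟩⟩
  exact hG (isCyclic_iff_exists_zpowers_eq_top.mpr ⟨g, hg⟩)

theorem isSubgroupCover_image_comap [DecidableEq (Subgroup G')] {S : Finset (Subgroup G)}
    (hS : IsSubgroupCover S) (f : G' →* G) (hf : Function.Surjective f) :
    IsSubgroupCover (S.image (comap f)) := by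
  refine ⟨Finset.forall_mem_image.mpr fun K hK htop ↦ ?_, fun g ↦ ?_⟩
  · exact hS.1 K hK (comap_injective hf (htop.trans (comap_top f).symm))
  · obtain ⟨K, hK, hg⟩ := hS.2 (f g)
    exact ⟨K.comap f, Finset.mem_image_of_mem _ hK, hg⟩

end Cover

section CoveringNumber

variable {p : ℕ} {G G' : Type*} [Group G] [Group G']

theorem powerfulCoveringNumber_le_card {S : Finset (Subgroup G)} (hS : IsSubgroupCover S)
    (hpow : ∀ K ∈ S, IsPowerful p K) : powerfulCoveringNumber p G ≤ S.card :=
  Nat.sInf_le ⟨S, rfl, hS, hpow⟩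

theorem exists_powerfulCover_card_eq [Finite G] (hG : ¬ IsCyclic G) :
    ∃ S : Finset (Subgroup G), S.card = powerfulCoveringNumber p G ∧ IsSubgroupCover S ∧
      ∀ K ∈ S, IsPowerful p K := by
  classical
  have := Fintype.ofFinite G
  refine Nat.sInf_mem (s := {n | ∃ S : Finset (Subgroup G),
    S.card = n ∧ IsSubgroupCover S ∧ ∀ K ∈ S, IsPowerful p K})
    ⟨_, Finset.univ.image fun g : G ↦ zpowers g, rfl, isSubgroupCover_image_zpowers hG,
      Finset.forall_mem_image.mpr fun _ _ ↦ IsPowerful.of_isMulCommutative⟩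

theorem powerfulCoveringNumber_le_of_surjective [Finite G] (hG : ¬ IsCyclic G) (f : G' →* G)
    (hf : Function.Surjective f)
    (hpow : ∀ K : Subgroup G, IsPowerful p K → IsPowerful p (K.comap f)) :
    powerfulCoveringNumber p G' ≤ powerfulCoveringNumber p G := by
  classical
  obtain ⟨S, hcard, hS, hSpow⟩ := exists_powerfulCover_card_eq (p := p) hG
  calc powerfulCoveringNumber p G' ≤ (S.image (comap f)).card :=
        powerfulCoveringNumber_le_card (isSubgroupCover_image_comap hS f hf)
          (Finset.forall_mem_image.mpr fun K hK ↦ hpow K (hSpow K hK))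
    _ ≤ S.card := Finset.card_image_le
    _ = powerfulCoveringNumber p G := hcard

end CoveringNumber

theorem powerfulCoveringNumber_prod_le_min_general
    (p : ℕ) (G H : Type*) [Group G] [Finite G] [Group H] [Finite H]
    (hGnc : ¬ IsCyclic G) (hGpow : IsPowerful p G)
    (hHnc : ¬ IsCyclic H) (hHpow : IsPowerful p H) :
    powerfulCoveringNumber p (G × H) ≤
      min (powerfulCoveringNumber p G) (powerfulCoveringNumber p H) := by
  have prod_top_powerful (K : Subgroup G) (hK : IsPowerful p K) :
      IsPowerful p (K.comap (MonoidHom.fst G H)) :=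
    prod_top (N := H) K ▸ hK.subgroup_prod (hHpow.of_mulEquiv topEquiv.symm)
  have top_prod_powerful (L : Subgroup H) (hL : IsPowerful p L) :
      IsPowerful p (L.comap (MonoidHom.snd G H)) :=
    top_prod (G := G) L ▸ (hGpow.of_mulEquiv topEquiv.symm).subgroup_prod hL
  exact le_min
    (powerfulCoveringNumber_le_of_surjective hGnc _ Prod.fst_surjective prod_top_powerful)
    (powerfulCoveringNumber_le_of_surjective hHnc _ Prod.snd_surjective top_prod_powerful)

/-- If `G` and `H` are finite noncyclic powerful `p`-groups, then
`σ_P(G × H) ≤ min (σ_P(G), σ_P(H))`. -/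
theorem powerfulCoveringNumber_prod_le_min
    (p : ℕ) (hp : p.Prime) (G H : Type*) [Group G] [Finite G] [Group H] [Finite H]
    (hG : IsPGroup p G) (hGnc : ¬ IsCyclic G) (hGpow : IsPowerful p G)
    (hH : IsPGroup p H) (hHnc : ¬ IsCyclic H) (hHpow : IsPowerful p H) :
    powerfulCoveringNumber p (G × H) ≤
      min (powerfulCoveringNumber p G) (powerfulCoveringNumber p H) :=
  powerfulCoveringNumber_prod_le_min_general p G H hGnc hGpow hHnc hHpow
end

section
/- Let n ≥ 2 and let H be a powerful subgroup of the dihedral group DihedralGroup (2^n) of order 2^(n+1). Then either H is cyclic or H is isomorphic to the Klein four-group ZMod 2 × ZMod 2. Moreover, if H is cyclic of order greater than 2, then H is contained in the rotation subgroup generated by r 1. -/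
/-!
If `H` consists of rotations, it lies in the cyclic group `⟨r 1⟩`. Otherwise `H` contains a
reflection `s`. The rotations of `H` form a cyclic group `⟨x⟩`; every fourth power of an element of
`H` lies in `⟨x ^ 4⟩`, because reflections have order two, and `⁅s, x⁆ = x ^ (-2)`. So
powerfulness gives `x ^ 2 ∈ ⟨x ^ 4⟩`, which in a `2`-group forces `x ^ 2 = 1`. Hence every element
of `H` squares to one and, `⟨r 1⟩` having index two, `|H| ≤ 4`: `H` is cyclic of order at most two
or a Klein four-group.
-/

open DihedralGroup

open scoped commutatorElement

theorem IsPGroup.eq_one_of_mem_zpowers_pow {p : ℕ} [hp : Fact p.Prime] {G : Type*} [Group G]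
    (hG : IsPGroup p G) {y : G} (hy : y ∈ Subgroup.zpowers (y ^ p)) : y = 1 := by
  obtain ⟨k, hk⟩ := hy
  have hdvd : (orderOf y : ℤ) ∣ p * k - 1 := by
    rw [orderOf_dvd_iff_zpow_eq_one, zpow_sub_one, zpow_mul, zpow_natCast]
    exact mul_inv_eq_one.mpr hk
  obtain ⟨m, hm⟩ := IsPGroup.iff_orderOf.mp hG y
  cases m with
  | zero => rwa [pow_zero, orderOf_eq_one_iff] at hm
  | succ m =>
    have hp_dvd : (p : ℤ) ∣ orderOf y := by
      rw [hm]
      exact_mod_cast dvd_pow_self p m.succ_ne_zero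
    have hp_one : (p : ℤ) ∣ 1 := by
      simpa using (dvd_mul_right (p : ℤ) k).sub (hp_dvd.trans hdvd)
    exact (hp.out.not_dvd_one (by exact_mod_cast hp_one)).elim

theorem Subgroup.card_le_index_mul_card_inf {G : Type*} [Group G] (H K : Subgroup G)
    (hK : K.index ≠ 0) : Nat.card H ≤ K.index * Nat.card (H ⊓ K : Subgroup G) := by
  have h := relIndex_mul_relIndex ⊥ (H ⊓ K) H bot_le inf_le_left
  rw [relIndex_bot_left, relIndex_bot_left, inf_relIndex_left] at h
  rw [← h, mul_comm]
  gcongr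
  rw [← relIndex_top_right]
  exact relIndex_le_of_le_right le_top (by rwa [relIndex_top_right])

theorem IsCyclic.card_le_two_of_sq_eq_one {G : Type*} [Group G] [IsCyclic G]
    (hsq : ∀ g : G, g ^ 2 = 1) : Nat.card G ≤ 2 := by
  rw [← IsCyclic.exponent_eq_card]
  exact Nat.le_of_dvd two_pos (Monoid.exponent_dvd_of_forall_pow_eq_one hsq)

theorem isCyclic_or_isKleinFour_of_sq_eq_one {G : Type*} [Group G] [Finite G]
    (hsq : ∀ g : G, g ^ 2 = 1) (hcard : Nat.card G ≤ 4) : IsCyclic G ∨ IsKleinFour G := by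
  obtain ⟨k, hk⟩ := (IsPGroup.iff_card (p := 2)).mp fun g => ⟨1, by rw [pow_one, hsq]⟩
  have hk2 : k ≤ 2 := (Nat.pow_le_pow_iff_right one_lt_two).mp (hk ▸ hcard)
  rcases hk2.lt_or_eq with hk1 | rfl
  · exact .inl (isCyclic_of_card_dvd_prime (p := 2) (hk ▸ Nat.pow_dvd_pow 2 (by omega : k ≤ 1)))
  · have : Nontrivial G := Finite.one_lt_card_iff_nontrivial.mp (by simp [hk])
    exact .inr ⟨hk, Nat.le_antisymm (Nat.le_of_dvd two_pos
      (Monoid.exponent_dvd_of_forall_pow_eq_one hsq)) Monoid.one_lt_exponent⟩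

theorem IsPowerful.commutatorElement_mem_closure {G : Type*} [Group G] {H : Subgroup G}
    (hH : IsPowerful 2 H) {a b : G} (ha : a ∈ H) (hb : b ∈ H) :
    ⁅a, b⁆ ∈ Subgroup.closure ((· ^ 4) '' (H : Set G)) := by
  have hmem := Subgroup.mem_map_of_mem H.subtype <| hH <|
    Subgroup.commutator_mem_commutator (Subgroup.mem_top ⟨a, ha⟩) (Subgroup.mem_top ⟨b, hb⟩)
  rw [MonoidHom.map_closure] at hmem
  refine Subgroup.closure_mono ?_ hmem
  rintro _ ⟨_, ⟨g, rfl⟩, rfl⟩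
  exact ⟨g, g.2, rfl⟩

namespace DihedralGroup

variable {N : ℕ}

theorem r_mem_zpowers_r_one (j : ZMod N) : r j ∈ Subgroup.zpowers (r 1 : DihedralGroup N) :=
  ⟨(j.cast : ℤ), by show r 1 ^ _ = _; rw [r_one_zpow, ZMod.intCast_zmod_cast]⟩

theorem commutatorElement_sr_r (a j : ZMod N) : ⁅sr a, r j⁆ = r j ^ (-2 : ℤ) := by
  rw [commutatorElement_def, inv_sr, inv_r, sr_mul_r, sr_mul_sr, r_mul_r, r_zpow]
  congr 1
  push_cast
  ring

theorem index_zpowers_r_one [NeZero N] :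
    (Subgroup.zpowers (r 1 : DihedralGroup N)).index = 2 := by
  have h := (Subgroup.zpowers (r 1 : DihedralGroup N)).index_mul_card
  rw [Nat.card_zpowers, orderOf_r_one, nat_card] at h
  exact Nat.eq_of_mul_eq_mul_right (NeZero.pos N) h

theorem isPGroup_two_pow (n : ℕ) : IsPGroup 2 (DihedralGroup (2 ^ n)) :=
  IsPGroup.of_card (n := n + 1) (by rw [nat_card, pow_succ'])

end DihedralGroup

namespace IsPowerful

variable {n : ℕ} {H : Subgroup (DihedralGroup (2 ^ n))} {a : ZMod (2 ^ n)}

theorem sq_eq_one_of_sr_mem_of_mem_zpowers (hH : IsPowerful 2 H) (ha : sr a ∈ H)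
    {x : DihedralGroup (2 ^ n)} (hx : x ∈ H ⊓ Subgroup.zpowers (r 1)) : x ^ 2 = 1 := by
  set R := H ⊓ Subgroup.zpowers (r 1)
  obtain ⟨g, hg⟩ := (Subgroup.isCyclic_of_le inf_le_right : IsCyclic R).exists_generator
  have hgen : ∀ y ∈ R, y ∈ Subgroup.zpowers (g : DihedralGroup (2 ^ n)) := fun y hy => by
    obtain ⟨k, hk⟩ := hg ⟨y, hy⟩
    exact ⟨k, congrArg Subtype.val hk⟩
  have hfourth : Subgroup.closure ((· ^ 4) '' (H : Set (DihedralGroup (2 ^ n)))) ≤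
      Subgroup.zpowers ((g : DihedralGroup (2 ^ n)) ^ 4) := by
    rw [Subgroup.closure_le]
    rintro _ ⟨h, hh, rfl⟩
    cases h with
    | r j =>
      obtain ⟨k, hk⟩ := hgen (r j) ⟨hh, r_mem_zpowers_r_one j⟩
      refine ⟨k, ?_⟩
      simp only [← hk, ← zpow_natCast, ← zpow_mul, mul_comm]
    | sr b =>
      have h4 : sr b ^ 4 = 1 := orderOf_dvd_iff_pow_eq_one.mp (by rw [orderOf_sr]; norm_num)
      simp only [SetLike.mem_coe, h4, one_mem]
  obtain ⟨j, hj⟩ : ∃ j, (g : DihedralGroup (2 ^ n)) = r j := by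
    obtain ⟨k, hk⟩ := g.2.2
    exact ⟨k, by rw [← hk]; exact r_one_zpow k⟩
  have hcomm := hH.commutatorElement_mem_closure ha g.2.1
  rw [hj, commutatorElement_sr_r, ← hj] at hcomm
  have hg2 : (g : DihedralGroup (2 ^ n)) ^ 2 = 1 := by
    refine (isPGroup_two_pow n).eq_one_of_mem_zpowers_pow ?_
    rw [← pow_mul]
    simpa using inv_mem (hfourth hcomm)
  obtain ⟨k, rfl⟩ := hgen x hx
  rw [← zpow_natCast, ← zpow_mul, mul_comm, zpow_mul, zpow_natCast, hg2, one_zpow]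

theorem sq_eq_one_of_sr_mem (hH : IsPowerful 2 H) (ha : sr a ∈ H) (g : H) : g ^ 2 = 1 := by
  obtain ⟨g, hg⟩ := g
  apply Subtype.ext
  cases g with
  | r j => exact hH.sq_eq_one_of_sr_mem_of_mem_zpowers ha ⟨hg, r_mem_zpowers_r_one j⟩
  | sr b => exact (sq _).trans (sr_mul_self b)

theorem card_le_four_of_sr_mem (hH : IsPowerful 2 H) (ha : sr a ∈ H) : Nat.card H ≤ 4 := by
  have : IsCyclic (H ⊓ Subgroup.zpowers (r 1) : Subgroup _) :=
    Subgroup.isCyclic_of_le inf_le_right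
  have hrot : Nat.card (H ⊓ Subgroup.zpowers (r 1) : Subgroup _) ≤ 2 :=
    IsCyclic.card_le_two_of_sq_eq_one fun x =>
      Subtype.ext (hH.sq_eq_one_of_sr_mem_of_mem_zpowers ha x.2)
  have h := H.card_le_index_mul_card_inf _ (index_zpowers_r_one.trans_ne two_ne_zero)
  rw [index_zpowers_r_one] at h
  omega

end IsPowerful

theorem dihedral_powerful_subgroup_general (n : ℕ)
    (H : Subgroup (DihedralGroup (2 ^ n))) (hH : IsPowerful 2 H) :
    (IsCyclic H ∨ Nonempty (H ≃* Multiplicative (ZMod 2 × ZMod 2))) ∧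
      (IsCyclic H → 2 < Nat.card H →
        H ≤ Subgroup.zpowers (r (1 : ZMod (2 ^ n)))) := by
  by_cases hrot : H ≤ Subgroup.zpowers (r 1)
  · exact ⟨.inl (Subgroup.isCyclic_of_le hrot), fun _ _ => hrot⟩
  obtain ⟨s, hsH, hsK⟩ := Set.not_subset.mp hrot
  obtain ⟨a, rfl⟩ : ∃ a, s = sr a := by
    cases s with
    | r j => exact absurd (r_mem_zpowers_r_one j) hsK
    | sr a => exact ⟨a, rfl⟩
  have hsq := hH.sq_eq_one_of_sr_mem hsH
  refine ⟨(isCyclic_or_isKleinFour_of_sq_eq_one hsq (hH.card_le_four_of_sr_mem hsH)).imp_right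
    (by intro; exact IsKleinFour.nonempty_mulEquiv),
    fun _ hgt => absurd (IsCyclic.card_le_two_of_sq_eq_one hsq) hgt.not_ge⟩

/-- A powerful subgroup of `DihedralGroup (2^n)` (`n ≥ 2`) is cyclic or isomorphic to the
Klein four-group; and if it is cyclic of order greater than `2`, it is contained in the
rotation subgroup `⟨r 1⟩`. -/
theorem dihedral_powerful_subgroup (n : ℕ) (hn : 2 ≤ n)
    (H : Subgroup (DihedralGroup (2 ^ n))) (hH : IsPowerful 2 H) :
    (IsCyclic H ∨ Nonempty (H ≃* Multiplicative (ZMod 2 × ZMod 2))) ∧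
      (IsCyclic H → 2 < Nat.card H →
        H ≤ Subgroup.zpowers (r (1 : ZMod (2 ^ n)))) :=
  dihedral_powerful_subgroup_general n H hH
end

section
/- Let n ≥ 2 and let H and K be two distinct subgroups of the dihedral group DihedralGroup (2^n), each isomorphic to the Klein four-group ZMod 2 × ZMod 2. Then H ∩ K equals the cyclic subgroup of order 2 generated by the half-turn r (2^(n-1)). -/
/-!
A Klein four-subgroup `H` of `D_{2^n}` has exponent two, and the only rotations squaring to `1`
are `1` and the half-turn `ρ = r (2^(n-1))`. Since `|H| = 4`, `H` contains two distinct
reflections; their product is a nontrivial rotation in `H`, so `ρ ∈ H`. If `H` and `K` share a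
reflection `s`, then every reflection `t ∈ H` has `s t ∈ {1, ρ}`, so `t ∈ {s, s ρ} ⊆ K`; hence
`H ≤ K` and `H = K` by cardinality. Thus distinct `H` and `K` meet exactly in `{1, ρ}`.
-/

open DihedralGroup

theorem ZMod.eq_zero_or_eq_two_pow_pred_of_add_self_eq_zero {n : ℕ} {x : ZMod (2 ^ n)}
    (hx : x + x = 0) : x = 0 ∨ x = 2 ^ (n - 1) := by
  have hlt : x.val < 2 ^ n := ZMod.val_lt x
  by_cases hsmall : x.val + x.val < 2 ^ n
  · left
    have hval := ZMod.val_add_of_lt hsmall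
    rw [hx, ZMod.val_zero] at hval
    exact (ZMod.val_eq_zero x).mp (by omega)
  · right
    have hval := ZMod.val_add_of_le (not_lt.mp hsmall)
    rw [hx, ZMod.val_zero] at hval
    obtain _ | m := n
    · omega
    · have hm : x.val = 2 ^ m := by have := pow_succ 2 m; omega
      rw [← ZMod.natCast_zmod_val x, hm]
      simp

theorem IsKleinFour.of_mulEquiv {G G' : Type*} [Group G] [Group G'] [IsKleinFour G']
    (e : G ≃* G') : IsKleinFour G where
  card_four := (Nat.card_congr e.toEquiv).trans IsKleinFour.card_four
  exponent_two := (Monoid.exponent_eq_of_mulEquiv e).trans IsKleinFour.exponent_two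

theorem Subgroup.mul_self_eq_one_of_isKleinFour {G : Type*} [Group G] {H : Subgroup G}
    [IsKleinFour H] {x : G} (hx : x ∈ H) : x * x = 1 :=
  congrArg Subtype.val (IsKleinFour.mul_self (⟨x, hx⟩ : H))

namespace DihedralGroup

variable {n : ℕ} {H K : Subgroup (DihedralGroup (2 ^ n))} [IsKleinFour H] [IsKleinFour K]

theorem eq_zero_or_eq_two_pow_pred_of_r_mem {k : ZMod (2 ^ n)} (hk : r k ∈ H) :
    k = 0 ∨ k = 2 ^ (n - 1) := by
  have hsq := Subgroup.mul_self_eq_one_of_isKleinFour hk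
  rw [r_mul_r, one_def, r.injEq] at hsq
  exact ZMod.eq_zero_or_eq_two_pow_pred_of_add_self_eq_zero hsq

theorem one_lt_ncard_setOf_sr_mem : 1 < {i : ZMod (2 ^ n) | sr i ∈ H}.ncard := by
  have hsub : (H : Set (DihedralGroup (2 ^ n))) ⊆
      {1, r (2 ^ (n - 1))} ∪ sr '' {i | sr i ∈ H} := by
    rintro (k | i) hx
    · rcases eq_zero_or_eq_two_pow_pred_of_r_mem hx with rfl | rfl
      · simp [r_zero]
      · simp
    · exact Or.inr ⟨i, hx, rfl⟩
  have hcard : 4 ≤ 2 + {i : ZMod (2 ^ n) | sr i ∈ H}.ncard :=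
    calc 4 = (H : Set (DihedralGroup (2 ^ n))).ncard := by
          rw [← Nat.card_coe_set_eq]; exact (IsKleinFour.card_four (G := H)).symm
      _ ≤ ({1, r (2 ^ (n - 1))} ∪ sr '' {i | sr i ∈ H}).ncard := Set.ncard_le_ncard hsub
      _ ≤ ({1, r (2 ^ (n - 1))} : Set (DihedralGroup (2 ^ n))).ncard
            + (sr '' {i | sr i ∈ H}).ncard := Set.ncard_union_le _ _
      _ ≤ 2 + {i : ZMod (2 ^ n) | sr i ∈ H}.ncard := by
          gcongr
          · exact (Set.ncard_insert_le _ _).trans (by simp)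
          · exact Set.ncard_image_le
  omega

theorem r_two_pow_pred_mem : r (2 ^ (n - 1)) ∈ H := by
  obtain ⟨i, hi, j, hj, hij⟩ :=
    Set.one_lt_ncard_iff_nontrivial.mp (one_lt_ncard_setOf_sr_mem (H := H))
  have hprod : r (j - i) ∈ H := sr_mul_sr i j ▸ H.mul_mem hi hj
  rcases eq_zero_or_eq_two_pow_pred_of_r_mem hprod with h | h
  · exact absurd (sub_eq_zero.mp h).symm hij
  · exact h ▸ hprod

theorem le_of_sr_mem {i : ZMod (2 ^ n)} (hiH : sr i ∈ H) (hiK : sr i ∈ K) : H ≤ K := by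
  rintro (k | j) hx
  · rcases eq_zero_or_eq_two_pow_pred_of_r_mem hx with rfl | rfl
    · exact r_zero (n := 2 ^ n) ▸ K.one_mem
    · exact r_two_pow_pred_mem
  · rcases eq_zero_or_eq_two_pow_pred_of_r_mem (sr_mul_sr i j ▸ H.mul_mem hiH hx) with h | h
    · rwa [sub_eq_zero.mp h]
    · rw [← sub_add_cancel j i, h, add_comm, ← sr_mul_r]
      exact K.mul_mem hiK r_two_pow_pred_mem

theorem eq_of_sr_mem {i : ZMod (2 ^ n)} (hiH : sr i ∈ H) (hiK : sr i ∈ K) : H = K :=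
  Subgroup.eq_of_le_of_card_ge (le_of_sr_mem hiH hiK)
    (by rw [IsKleinFour.card_four (G := H), IsKleinFour.card_four (G := K)])

end DihedralGroup

theorem dihedral_klein_four_intersection_general (n : ℕ)
    (H K : Subgroup (DihedralGroup (2 ^ n))) (hne : H ≠ K)
    (hH : Nonempty (H ≃* Multiplicative (ZMod 2 × ZMod 2)))
    (hK : Nonempty (K ≃* Multiplicative (ZMod 2 × ZMod 2))) :
    H ⊓ K = Subgroup.zpowers (r (2 ^ (n - 1) : ZMod (2 ^ n))) := by
  have : IsKleinFour H := IsKleinFour.of_mulEquiv hH.some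
  have : IsKleinFour K := IsKleinFour.of_mulEquiv hK.some
  refine le_antisymm ?_ (Subgroup.zpowers_le.mpr ⟨r_two_pow_pred_mem, r_two_pow_pred_mem⟩)
  rintro (k | i) ⟨hxH, hxK⟩
  · rcases eq_zero_or_eq_two_pow_pred_of_r_mem hxH with rfl | rfl
    · exact r_zero (n := 2 ^ n) ▸ Subgroup.one_mem _
    · exact Subgroup.mem_zpowers _
  · exact absurd (eq_of_sr_mem hxH hxK) hne

/-- Two distinct Klein four-subgroups of `DihedralGroup (2^n)` (`n ≥ 2`) intersect in the
order-two subgroup generated by the half-turn `r (2^(n-1))`. -/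
theorem dihedral_klein_four_intersection (n : ℕ) (hn : 2 ≤ n)
    (H K : Subgroup (DihedralGroup (2 ^ n))) (hne : H ≠ K)
    (hH : Nonempty (H ≃* Multiplicative (ZMod 2 × ZMod 2)))
    (hK : Nonempty (K ≃* Multiplicative (ZMod 2 × ZMod 2))) :
    H ⊓ K = Subgroup.zpowers (r (2 ^ (n - 1) : ZMod (2 ^ n))) :=
  dihedral_klein_four_intersection_general n H K hne hH hK
end
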